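/- arXiv:1711.03396 — 2 statements merged into one kernel-verified Lean document; each statement's English description precedes it below -/
import Mathlib

section
/- Under the asymmetric Lovász Local Lemma condition, for uniform random q-colourings of a hypergraph H whose hyperedges all have size between k' and k, if t ≥ k and q ≥ (etΔ)^{1/(k'−1)} where Δ is the maximum degree, then for every vertex v and every colour c, the probability under the uniform distribution over proper colourings that v receives colour c is at most (1/q)(1 + 4/t). -/
/-!
This is the Haeupler–Saha–Srinivasan bound for the event `σ v = c` with the constant weight
`x = (tΔ)⁻¹`, proved by counting colourings.

The local lemma says that for `S ⊆ 𝓔` and `e ∉ S`, at most an `x`-fraction of the colourings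
avoiding `S` make `e` monochromatic. By strong induction on `S`: discarding the edges of `S` that
meet `e` loses at most a factor `(1 - x) ^ |Γ(e)|`, since they can be put back one at a time, each
costing a factor `1 - x` by the induction hypothesis; once they are gone, `e` being monochromatic
is independent of the remaining constraints and has probability at most
`q ^ (1 - |e|) ≤ x (1 - x) ^ |Γ(e)|`.

The same two steps applied to the event `σ v = c`, which meets at most `Δ` edges, bound its
conditional probability by `q⁻¹ (1 - x) ^ (-Δ) ≤ q⁻¹ (1 - 1/t)⁻¹ ≤ q⁻¹ (1 + 4/t)`. The local lemma
condition holds because `|Γ(e)| ≤ k (Δ - 1) ≤ t (Δ - 1)` makes `(1 - x) ^ |Γ(e)| ≥ e⁻¹`, while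
`q ^ (k' - 1) ≥ etΔ`.
-/

open Finset

theorem Real.exp_neg_one_le_one_sub_pow {x : ℝ} (hx : x < 1) {m : ℕ}
    (hm : m * x ≤ 1 - x) : Real.exp (-1) ≤ (1 - x) ^ m := by
  have h1x : 0 < 1 - x := sub_pos.mpr hx
  calc Real.exp (-1) ≤ Real.exp (m * (1 - (1 - x)⁻¹)) := by
        gcongr
        rw [show (m : ℝ) * (1 - (1 - x)⁻¹) = -(m * x) / (1 - x) by field_simp; ring,
          le_div_iff₀ h1x]
        linarith
    _ ≤ Real.exp (m * Real.log (1 - x)) := by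
        gcongr
        exact Real.one_sub_inv_le_log_of_pos h1x
    _ = (1 - x) ^ m := by rw [Real.exp_nat_mul, Real.exp_log h1x]

theorem le_pow_sub_one_of_rpow_one_div_sub_one_le {a b : ℝ} (ha : 0 ≤ a) (hb : 0 ≤ b) {n : ℕ}
    (hn : 2 ≤ n) (h : a ^ ((1 : ℝ) / ((n : ℝ) - 1)) ≤ b) : a ≤ b ^ (n - 1) := by
  have hn' : (0 : ℝ) < (n - 1 : ℕ) := by exact_mod_cast (by omega : 0 < n - 1)
  rwa [← Real.rpow_natCast, ← Real.rpow_inv_le_iff_of_pos ha hb hn', Nat.cast_sub (by omega),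
    Nat.cast_one, ← one_div]

theorem one_le_inv_mul_one_sub_inv_pow_mul {t Δ Q : ℝ} (ht : 2 ≤ t) (hΔ : 1 ≤ Δ) {N : ℕ}
    (hN : N ≤ t * (Δ - 1)) (hQ : Real.exp 1 * t * Δ ≤ Q) :
    1 ≤ (t * Δ)⁻¹ * (1 - (t * Δ)⁻¹) ^ N * Q := by
  have htΔ : 2 ≤ t * Δ := by nlinarith
  have hexp : Real.exp (-1) ≤ (1 - (t * Δ)⁻¹) ^ N := by
    refine Real.exp_neg_one_le_one_sub_pow (inv_lt_one_of_one_lt₀ (by linarith)) ?_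
    rw [← div_eq_mul_inv, div_le_iff₀ (by positivity), sub_mul, inv_mul_cancel₀ (by positivity)]
    nlinarith
  calc (1 : ℝ) = (t * Δ)⁻¹ * Real.exp (-1) * (Real.exp 1 * t * Δ) := by
        rw [Real.exp_neg]
        field_simp
    _ ≤ (t * Δ)⁻¹ * (1 - (t * Δ)⁻¹) ^ N * Q := by
        gcongr
        exact mul_nonneg (by positivity) (hexp.trans' (Real.exp_pos _).le)

theorem one_le_one_add_four_div_mul_one_sub_inv_pow {t Δ : ℝ} (ht : 2 ≤ t) (hΔ : 1 ≤ Δ)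
    {d : ℕ} (hd : d ≤ Δ) : 1 ≤ (1 + 4 / t) * (1 - (t * Δ)⁻¹) ^ d := by
  have htΔ : 2 ≤ t * Δ := by nlinarith
  have hdx : (d : ℝ) * (t * Δ)⁻¹ ≤ t⁻¹ :=
    calc (d : ℝ) * (t * Δ)⁻¹ ≤ Δ * (t * Δ)⁻¹ := by gcongr
      _ = t⁻¹ := by field_simp
  have hbernoulli : 1 - t⁻¹ ≤ (1 - (t * Δ)⁻¹) ^ d := by
    have hx : (t * Δ)⁻¹ ≤ 2 := (inv_le_one_of_one_le₀ (by linarith)).trans one_le_two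
    have := one_add_mul_le_pow (neg_le_neg hx) d
    rw [← sub_eq_add_neg] at this
    linarith
  calc (1 : ℝ) ≤ 1 + (3 * t - 4) / t ^ 2 := le_add_of_nonneg_right (by bound)
    _ = (1 + 4 / t) * (1 - t⁻¹) := by field_simp; ring
    _ ≤ (1 + 4 / t) * (1 - (t * Δ)⁻¹) ^ d := by gcongr

namespace HypergraphColouring

variable {V α : Type*}

variable (α) in
def monochromatic (e : Finset V) : Set (V → α) := {σ | ∃ c, ∀ u ∈ e, σ u = c}

variable (α) in
def avoiding (S : Finset (Finset V)) : Set (V → α) := {σ | ∀ e ∈ S, σ ∉ monochromatic α e}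

theorem avoiding_anti {S T : Finset (Finset V)} (h : S ⊆ T) : avoiding α T ⊆ avoiding α S :=
  fun _ hσ f hf => hσ f (h hf)

theorem dependsOn_monochromatic (e : Finset V) :
    DependsOn (· ∈ monochromatic α e) (e : Set V) := fun _ _ h =>
  propext <| exists_congr fun _ => forall₂_congr fun u hu => by rw [h u hu]

theorem dependsOn_avoiding {S : Finset (Finset V)} {W : Finset V}
    (hS : ∀ f ∈ S, Disjoint f W) : DependsOn (· ∈ avoiding α S) (↑W)ᶜ := fun _ _ h =>
  propext <| forall₂_congr fun f hf => not_congr <| Eq.to_iff <|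
    dependsOn_monochromatic f fun u hu => h u fun huW => disjoint_left.mp (hS f hf) hu huW

variable [DecidableEq V]

/-- The dependency neighbourhood `Γ(e)` of the local lemma. -/
def neighbours (𝓔 : Finset (Finset V)) (e : Finset V) : Finset (Finset V) :=
  {f ∈ 𝓔 | f ≠ e ∧ ¬ Disjoint f e}

theorem card_neighbours_le {𝓔 : Finset (Finset V)} {Δ : ℕ}
    (hdeg : ∀ v, #{e ∈ 𝓔 | v ∈ e} ≤ Δ) {e : Finset V} (he : e ∈ 𝓔) :
    #(neighbours 𝓔 e) ≤ #e * (Δ - 1) := by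
  calc #(neighbours 𝓔 e) ≤ #(e.biUnion fun u => {f ∈ 𝓔 | u ∈ f}.erase e) := by
        refine card_le_card fun f hf => ?_
        obtain ⟨hf𝓔, hfe, hmeet⟩ := mem_filter.mp hf
        obtain ⟨u, huf, hue⟩ := not_disjoint_iff.mp hmeet
        exact mem_biUnion.mpr ⟨u, hue, mem_erase.mpr ⟨hfe, mem_filter.mpr ⟨hf𝓔, huf⟩⟩⟩
    _ ≤ ∑ u ∈ e, #({f ∈ 𝓔 | u ∈ f}.erase e) := card_biUnion_le
    _ ≤ ∑ u ∈ e, (Δ - 1) := sum_le_sum fun u hu => by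
        rw [card_erase_of_mem (mem_filter.mpr ⟨he, hu⟩)]
        exact Nat.sub_le_sub_right (hdeg u) 1
    _ = #e * (Δ - 1) := by rw [sum_const, smul_eq_mul]

theorem avoiding_insert (f : Finset V) (S : Finset (Finset V)) :
    avoiding α (insert f S) = avoiding α S \ monochromatic α f := by
  ext σ
  simp [avoiding, and_comm]

theorem ncard_inter_mul_card_eq {W : Finset V} {A B : Set (V → α)}
    (hA : DependsOn (· ∈ A) (W : Set V)) (hB : DependsOn (· ∈ B) (↑W)ᶜ) :
    (A ∩ B).ncard * Nat.card (V → α) = A.ncard * B.ncard := by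
  have agree_in (σ τ : V → α) : ∀ u ∈ (W : Set V), W.piecewise σ τ u = σ u :=
    fun _ hu => piecewise_eq_of_mem _ _ _ hu
  have agree_out (σ τ : V → α) : ∀ u ∈ (↑W : Set V)ᶜ, W.piecewise σ τ u = τ u :=
    fun _ hu => piecewise_eq_of_notMem _ _ _ hu
  have swap (σ τ : V → α) : W.piecewise (W.piecewise σ τ) (W.piecewise τ σ) = σ := by
    ext u
    by_cases hu : u ∈ W <;> simp [hu]
  -- exchange the restrictions to `W` of the two colourings
  let E : ↥(A ∩ B) × (V → α) ≃ A × B :=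
    { toFun p := (⟨W.piecewise p.1 p.2, (hA (agree_in _ _)).mpr p.1.2.1⟩,
        ⟨W.piecewise p.2 p.1, (hB (agree_out _ _)).mpr p.1.2.2⟩)
      invFun p := (⟨W.piecewise p.1 p.2, (hA (agree_in _ _)).mpr p.1.2,
        (hB (agree_out _ _)).mpr p.2.2⟩, W.piecewise p.2 p.1)
      left_inv p := by ext <;> simp only [swap]
      right_inv p := by ext <;> simp only [swap] }
  rw [← Nat.card_coe_set_eq, ← Nat.card_coe_set_eq, ← Nat.card_coe_set_eq,
    ← Nat.card_prod, ← Nat.card_prod, Nat.card_congr E]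

theorem ncard_eval_eq_mul_card (v : V) (c : α) :
    {σ : V → α | σ v = c}.ncard * Nat.card α = Nat.card (V → α) := by
  let E : {σ : V → α | σ v = c} × α ≃ (V → α) :=
    { toFun p := Function.update p.1 v p.2
      invFun τ := (⟨Function.update τ v c, by simp⟩, τ v)
      left_inv := by
        rintro ⟨⟨σ, hσ : σ v = c⟩, a⟩
        ext <;> simp [← hσ]
      right_inv τ := by simp }
  rw [← Nat.card_coe_set_eq, ← Nat.card_prod, Nat.card_congr E]

section Finite

variable [Finite V] [Finite α]

theorem ncard_monochromatic_mul_pow_le {e : Finset V} (he : e.Nonempty) :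
    (monochromatic α e).ncard * Nat.card α ^ (#e - 1) ≤ Nat.card (V → α) := by
  obtain ⟨u₀, hu₀⟩ := he
  let R := e.erase u₀
  have hinj : Function.Injective fun p : monochromatic α e × (R → α) =>
      fun u => if h : u ∈ R then p.2 ⟨u, h⟩ else p.1.1 u := by
    rintro ⟨⟨σ, cσ, hσ⟩, g⟩ ⟨⟨τ, cτ, hτ⟩, h⟩ hστ
    have off (u) (hu : u ∉ R) : σ u = τ u := by simpa [hu] using congrFun hστ u
    have on (u : R) : g u = h u := by simpa [u.2] using congrFun hστ u
    -- on `R` both colourings are constant, equal to their value at `u₀ ∉ R`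
    have hu₀ : σ u₀ = τ u₀ := off u₀ (notMem_erase u₀ e)
    refine Prod.ext (Subtype.ext (funext fun u => ?_)) (funext on)
    by_cases hu : u ∈ R
    · show σ u = τ u
      have hue := mem_of_mem_erase hu
      rw [hσ u hue, hτ u hue, ← hσ u₀ ‹_›, ← hτ u₀ ‹_›, hu₀]
    · exact off u hu
  have := Nat.card_le_card_of_injective _ hinj
  rwa [Nat.card_prod, Nat.card_coe_set_eq, Nat.card_fun, Nat.card_eq_fintype_card (α := R),
    Fintype.card_coe, card_erase_of_mem hu₀] at this

theorem one_sub_mul_ncard_avoiding_le_insert {x : ℝ} {S : Finset (Finset V)} {f : Finset V}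
    (h : ((avoiding α S ∩ monochromatic α f).ncard : ℝ) ≤ x * (avoiding α S).ncard) :
    (1 - x) * (avoiding α S).ncard ≤ (avoiding α (insert f S)).ncard := by
  have hsplit := Set.ncard_inter_add_ncard_sdiff_eq_ncard (avoiding α S) (monochromatic α f)
  rw [avoiding_insert]
  rify at hsplit
  linarith

theorem pow_mul_ncard_avoiding_le_union {x : ℝ} (hx : x ≤ 1) (T U : Finset (Finset V))
    (h : ∀ U' ⊆ U, ∀ f ∈ U \ U', ((avoiding α (T ∪ U') ∩ monochromatic α f).ncard : ℝ)
      ≤ x * (avoiding α (T ∪ U')).ncard) :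
    (1 - x) ^ #U * (avoiding α T).ncard ≤ (avoiding α (T ∪ U)).ncard := by
  induction U using Finset.induction_on with
  | empty => simp
  | insert f U hf ih =>
    have ih' := ih fun U' hU' g hg =>
      h U' (hU'.trans (subset_insert f U)) g (sdiff_subset_sdiff (subset_insert f U) le_rfl hg)
    have step := one_sub_mul_ncard_avoiding_le_insert (h U (subset_insert f U) f (by simp [hf]))
    rw [card_insert_of_notMem hf, pow_succ', union_insert, mul_assoc]
    exact (mul_le_mul_of_nonneg_left ih' (by linarith)).trans step

theorem pow_mul_ncard_avoiding_filter_le {x : ℝ} (hx : x ≤ 1) (S : Finset (Finset V))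
    (W : Finset V)
    (h : ∀ T ⊂ S, ∀ f ∈ S, f ∉ T → ((avoiding α T ∩ monochromatic α f).ncard : ℝ)
      ≤ x * (avoiding α T).ncard) :
    (1 - x) ^ #{f ∈ S | ¬ Disjoint f W} * (avoiding α {f ∈ S | Disjoint f W}).ncard
      ≤ (avoiding α S).ncard := by
  have hS : {f ∈ S | Disjoint f W} ∪ {f ∈ S | ¬ Disjoint f W} = S :=
    filter_union_filter_not_eq _ S
  have hpeel := pow_mul_ncard_avoiding_le_union hx {f ∈ S | Disjoint f W}
    {f ∈ S | ¬ Disjoint f W} fun U hU f hf => by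
      obtain ⟨hf₁, hfU⟩ := mem_sdiff.mp hf
      have hfS := (mem_filter.mp hf₁).1
      have hf : f ∉ {f ∈ S | Disjoint f W} ∪ U := by
        simp only [mem_union, mem_filter, not_or]
        exact ⟨fun h => (mem_filter.mp hf₁).2 h.2, hfU⟩
      refine h _ ((ssubset_iff_of_subset ?_).mpr ⟨f, hfS, hf⟩) f hfS hf
      exact union_subset (filter_subset _ S) (hU.trans (filter_subset _ S))
  rwa [hS] at hpeel

theorem ncard_avoiding_inter_mul_card_le (S : Finset (Finset V)) {W : Finset V}
    {B : Set (V → α)} (hB : DependsOn (· ∈ B) (W : Set V)) :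
    (avoiding α S ∩ B).ncard * Nat.card (V → α)
      ≤ B.ncard * (avoiding α {f ∈ S | Disjoint f W}).ncard := by
  calc (avoiding α S ∩ B).ncard * Nat.card (V → α)
      ≤ (B ∩ avoiding α {f ∈ S | Disjoint f W}).ncard * Nat.card (V → α) := by
        refine Nat.mul_le_mul_right _ (Set.ncard_le_ncard fun σ hσ => ?_)
        exact ⟨hσ.2, avoiding_anti (filter_subset _ S) hσ.1⟩
    _ = B.ncard * (avoiding α {f ∈ S | Disjoint f W}).ncard :=
        ncard_inter_mul_card_eq hB (dependsOn_avoiding fun f hf => (mem_filter.mp hf).2)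

variable (α) in
/-- The hypothesis `Pr[e monochromatic] ≤ x ∏_{f ∈ Γ(e)} (1 - x)` of the local lemma, for the
constant weight `x`. -/
structure LocalLemmaCondition (𝓔 : Finset (Finset V)) (x : ℝ) : Prop where
  nonneg : 0 ≤ x
  le_one : x ≤ 1
  ncard_monochromatic_le : ∀ e ∈ 𝓔,
    ((monochromatic α e).ncard : ℝ) ≤ x * (1 - x) ^ #(neighbours 𝓔 e) * Nat.card (V → α)

variable [Nonempty α] {𝓔 : Finset (Finset V)} {x : ℝ}

theorem LocalLemmaCondition.ncard_avoiding_inter_monochromatic_le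
    (hx : LocalLemmaCondition α 𝓔 x) {S : Finset (Finset V)} (hS : S ⊆ 𝓔) {e : Finset V}
    (he : e ∈ 𝓔) (heS : e ∉ S) :
    ((avoiding α S ∩ monochromatic α e).ncard : ℝ) ≤ x * (avoiding α S).ncard := by
  induction S using Finset.strongInduction generalizing e with
  | H S ih =>
    have hx0 := hx.nonneg
    have hN : (0 : ℝ) < Nat.card (V → α) := by exact_mod_cast Nat.card_pos
    have hsplit : ((avoiding α S ∩ monochromatic α e).ncard : ℝ) * Nat.card (V → α)
        ≤ (monochromatic α e).ncard * (avoiding α {f ∈ S | Disjoint f e}).ncard := by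
      exact_mod_cast ncard_avoiding_inter_mul_card_le S (dependsOn_monochromatic e)
    have hpeel := pow_mul_ncard_avoiding_filter_le hx.le_one S e fun T hT f hf hfT =>
      ih T hT (hT.subset.trans hS) (hS hf) hfT
    have hmeet : #{f ∈ S | ¬ Disjoint f e} ≤ #(neighbours 𝓔 e) := by
      refine card_le_card fun f hf => ?_
      obtain ⟨hfS, hfe⟩ := mem_filter.mp hf
      exact mem_filter.mpr ⟨hS hfS, fun h => heS (h ▸ hfS), hfe⟩
    refine le_of_mul_le_mul_right ?_ hN
    calc ((avoiding α S ∩ monochromatic α e).ncard : ℝ) * Nat.card (V → α)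
        ≤ (monochromatic α e).ncard * (avoiding α {f ∈ S | Disjoint f e}).ncard := hsplit
      _ ≤ x * (1 - x) ^ #(neighbours 𝓔 e) * Nat.card (V → α)
            * (avoiding α {f ∈ S | Disjoint f e}).ncard := by
          gcongr
          exact hx.ncard_monochromatic_le e he
      _ ≤ x * (1 - x) ^ #{f ∈ S | ¬ Disjoint f e} * Nat.card (V → α)
            * (avoiding α {f ∈ S | Disjoint f e}).ncard := by
          gcongr x * ?_ * _ * _
          exact pow_le_pow_of_le_one (sub_nonneg.mpr hx.le_one) (sub_le_self 1 hx0) hmeet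
      _ = x * Nat.card (V → α) * ((1 - x) ^ #{f ∈ S | ¬ Disjoint f e}
            * (avoiding α {f ∈ S | Disjoint f e}).ncard) := by ring
      _ ≤ x * Nat.card (V → α) * (avoiding α S).ncard := by gcongr
      _ = x * (avoiding α S).ncard * Nat.card (V → α) := by ring

theorem LocalLemmaCondition.ncard_avoiding_inter_mul_pow_le (hx : LocalLemmaCondition α 𝓔 x)
    {W : Finset V} {B : Set (V → α)} (hB : DependsOn (· ∈ B) (W : Set V)) :
    ((avoiding α 𝓔 ∩ B).ncard : ℝ) * Nat.card (V → α) * (1 - x) ^ #{f ∈ 𝓔 | ¬ Disjoint f W}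
      ≤ B.ncard * (avoiding α 𝓔).ncard := by
  have hsplit : ((avoiding α 𝓔 ∩ B).ncard : ℝ) * Nat.card (V → α)
      ≤ B.ncard * (avoiding α {f ∈ 𝓔 | Disjoint f W}).ncard := by
    exact_mod_cast ncard_avoiding_inter_mul_card_le 𝓔 hB
  have hpeel := pow_mul_ncard_avoiding_filter_le hx.le_one 𝓔 W fun T hT f hf hfT =>
    hx.ncard_avoiding_inter_monochromatic_le hT.subset hf hfT
  have hx1 := hx.le_one
  calc ((avoiding α 𝓔 ∩ B).ncard : ℝ) * Nat.card (V → α) * (1 - x) ^ #{f ∈ 𝓔 | ¬ Disjoint f W}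
      ≤ B.ncard * (avoiding α {f ∈ 𝓔 | Disjoint f W}).ncard
          * (1 - x) ^ #{f ∈ 𝓔 | ¬ Disjoint f W} := by
        gcongr
    _ = B.ncard * ((1 - x) ^ #{f ∈ 𝓔 | ¬ Disjoint f W}
          * (avoiding α {f ∈ 𝓔 | Disjoint f W}).ncard) := by ring
    _ ≤ B.ncard * (avoiding α 𝓔).ncard := by gcongr

theorem LocalLemmaCondition.ncard_avoiding_inter_eval_mul_le (hx : LocalLemmaCondition α 𝓔 x)
    (v : V) (c : α) :
    ((avoiding α 𝓔 ∩ {σ | σ v = c}).ncard : ℝ) * Nat.card α * (1 - x) ^ #{f ∈ 𝓔 | v ∈ f}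
      ≤ (avoiding α 𝓔).ncard := by
  have hB : DependsOn (· ∈ {σ : V → α | σ v = c}) ({v} : Finset V) := fun _ _ h => by
    simp [h v (by simp)]
  have key := hx.ncard_avoiding_inter_mul_pow_le hB
  have hcard : ({σ : V → α | σ v = c}.ncard : ℝ) * Nat.card α = Nat.card (V → α) := by
    exact_mod_cast ncard_eval_eq_mul_card v c
  have hpos : (0 : ℝ) < {σ : V → α | σ v = c}.ncard := by
    exact_mod_cast (Set.ncard_pos (s := {σ : V → α | σ v = c})).mpr ⟨fun _ => c, rfl⟩
  simp only [disjoint_singleton_right, not_not, ← hcard] at key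
  refine le_of_mul_le_mul_left ?_ hpos
  linarith

theorem localLemmaCondition_inv_mul {k k' Δ : ℕ} {t : ℝ} (hk' : 2 ≤ k')
    (hsize : ∀ e ∈ 𝓔, k' ≤ #e ∧ #e ≤ k) (hdeg : ∀ v, #{e ∈ 𝓔 | v ∈ e} ≤ Δ) (hΔ : 1 ≤ Δ)
    (ht : k ≤ t) (ht2 : 2 ≤ t) (hq : Real.exp 1 * t * Δ ≤ (Nat.card α : ℝ) ^ (k' - 1)) :
    LocalLemmaCondition α 𝓔 (t * Δ)⁻¹ := by
  have hΔR : (1 : ℝ) ≤ Δ := by exact_mod_cast hΔ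
  have hx1 : (t * Δ)⁻¹ ≤ 1 := inv_le_one_of_one_le₀ (by nlinarith)
  refine ⟨by positivity, hx1, fun e he => ?_⟩
  obtain ⟨hk'e, hek⟩ := hsize e he
  have hcount : ((monochromatic α e).ncard : ℝ) * Nat.card α ^ (#e - 1) ≤ Nat.card (V → α) := by
    exact_mod_cast ncard_monochromatic_mul_pow_le (card_pos.mp (by omega))
  have hΓ : (#(neighbours 𝓔 e) : ℝ) ≤ t * (Δ - 1) :=
    calc (#(neighbours 𝓔 e) : ℝ) ≤ (#e * (Δ - 1) : ℕ) := by
          exact_mod_cast card_neighbours_le hdeg he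
      _ = #e * ((Δ : ℝ) - 1) := by push_cast [Nat.cast_sub hΔ]; ring
      _ ≤ t * (Δ - 1) := by
          gcongr
          exact (Nat.cast_le.mpr hek).trans ht
  have hq' : Real.exp 1 * t * Δ ≤ (Nat.card α : ℝ) ^ (#e - 1) :=
    hq.trans (pow_le_pow_right₀ (by exact_mod_cast Nat.card_pos) (by omega))
  have hweight := one_le_inv_mul_one_sub_inv_pow_mul ht2 hΔR hΓ hq'
  calc ((monochromatic α e).ncard : ℝ)
      ≤ (monochromatic α e).ncard
          * ((t * Δ)⁻¹ * (1 - (t * Δ)⁻¹) ^ #(neighbours 𝓔 e) * Nat.card α ^ (#e - 1)) :=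
        le_mul_of_one_le_right (by positivity) hweight
    _ = (t * Δ)⁻¹ * (1 - (t * Δ)⁻¹) ^ #(neighbours 𝓔 e)
          * ((monochromatic α e).ncard * Nat.card α ^ (#e - 1)) := by ring
    _ ≤ (t * Δ)⁻¹ * (1 - (t * Δ)⁻¹) ^ #(neighbours 𝓔 e) * Nat.card (V → α) := by gcongr

theorem exists_localLemmaCondition {k k' Δ : ℕ} {t : ℝ} (hk' : 2 ≤ k')
    (hsize : ∀ e ∈ 𝓔, k' ≤ #e ∧ #e ≤ k) (hdeg : ∀ v, #{e ∈ 𝓔 | v ∈ e} ≤ Δ) (ht : k ≤ t)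
    (hq : Real.exp 1 * t * Δ ≤ (Nat.card α : ℝ) ^ (k' - 1)) (v : V) :
    ∃ x, LocalLemmaCondition α 𝓔 x ∧ 1 ≤ (1 + 4 / t) * (1 - x) ^ #{e ∈ 𝓔 | v ∈ e} := by
  rcases 𝓔.eq_empty_or_nonempty with rfl | ⟨e₀, he₀⟩
  · exact ⟨0, ⟨le_rfl, zero_le_one, by simp⟩,
      by simpa using div_nonneg zero_le_four (k.cast_nonneg.trans ht)⟩
  obtain ⟨hk'e₀, he₀k⟩ := hsize e₀ he₀
  obtain ⟨u₀, hu₀⟩ := card_pos.mp (by omega : 0 < #e₀)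
  have hΔ : 1 ≤ Δ := (card_pos.mpr ⟨e₀, mem_filter.mpr ⟨he₀, hu₀⟩⟩).trans_le (hdeg u₀)
  have ht2 : 2 ≤ t := le_trans (by exact_mod_cast hk'.trans (hk'e₀.trans he₀k)) ht
  exact ⟨_, localLemmaCondition_inv_mul hk' hsize hdeg hΔ ht ht2 hq,
    one_le_one_add_four_div_mul_one_sub_inv_pow ht2 (by exact_mod_cast hΔ)
      (by exact_mod_cast hdeg v)⟩

end Finite

end HypergraphColouring

open HypergraphColouring in
theorem marginal_upper_bound_general
    {V : Type*} [Fintype V] [DecidableEq V] (𝓔 : Finset (Finset V))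
    (q k k' Δ : ℕ) (t : ℝ) (hk' : 2 ≤ k')
    (hsize : ∀ e ∈ 𝓔, k' ≤ e.card ∧ e.card ≤ k)
    (hdeg : ∀ v : V, (𝓔.filter (fun e => v ∈ e)).card ≤ Δ)
    (ht : (k : ℝ) ≤ t)
    (hq : (Real.exp 1 * t * (Δ : ℝ)) ^ ((1 : ℝ) / ((k' : ℝ) - 1)) ≤ (q : ℝ))
    (v : V) (c : Fin q) :
    ({σ : V → Fin q | (∀ e ∈ 𝓔, ¬ ∃ c', ∀ u ∈ e, σ u = c') ∧ σ v = c}.ncard : ℝ)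
      ≤ (1 / (q : ℝ)) * (1 + 4 / t)
        * ({σ : V → Fin q | ∀ e ∈ 𝓔, ¬ ∃ c', ∀ u ∈ e, σ u = c'}.ncard : ℝ) := by
  have : Nonempty (Fin q) := ⟨c⟩
  have ht0 : 0 ≤ t := k.cast_nonneg.trans ht
  have hqpow : Real.exp 1 * t * Δ ≤ (Nat.card (Fin q) : ℝ) ^ (k' - 1) := by
    simpa using le_pow_sub_one_of_rpow_one_div_sub_one_le
      (by positivity) q.cast_nonneg hk' hq
  obtain ⟨x, hx, hmarg⟩ := exists_localLemmaCondition hk' hsize hdeg ht hqpow v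
  have hbound := hx.ncard_avoiding_inter_eval_mul_le v c
  rw [Nat.card_fin] at hbound
  change ((avoiding (Fin q) 𝓔 ∩ {σ | σ v = c}).ncard : ℝ)
    ≤ 1 / q * (1 + 4 / t) * (avoiding (Fin q) 𝓔).ncard
  have hq0 : (0 : ℝ) < q := by exact_mod_cast c.pos
  calc ((avoiding (Fin q) 𝓔 ∩ {σ | σ v = c}).ncard : ℝ)
      ≤ (avoiding (Fin q) 𝓔 ∩ {σ | σ v = c}).ncard
          * ((1 + 4 / t) * (1 - x) ^ #{e ∈ 𝓔 | v ∈ e}) :=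
        le_mul_of_one_le_right (by positivity) hmarg
    _ = 1 / q * (1 + 4 / t)
          * ((avoiding (Fin q) 𝓔 ∩ {σ | σ v = c}).ncard * q * (1 - x) ^ #{e ∈ 𝓔 | v ∈ e}) := by
        field_simp
    _ ≤ 1 / q * (1 + 4 / t) * (avoiding (Fin q) 𝓔).ncard := by gcongr

/-- Marginal upper bound in the local lemma regime.  Let `H = (V,𝓔)` be a
hypergraph of maximum degree `Δ` whose hyperedges all have size between `k'` and `k`.
If `t ≥ k` and `q ≥ (etΔ)^{1/(k'−1)}`, then for every vertex `v` and colour `c`, the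
probability under the uniform distribution over proper `q`-colourings that `v` gets
colour `c` is at most `(1/q)(1 + 4/t)`. -/
theorem marginal_upper_bound
    {V : Type*} [Fintype V] [DecidableEq V] (𝓔 : Finset (Finset V))
    (q k k' Δ : ℕ) (t : ℝ) (hk' : 2 ≤ k')
    (hsize : ∀ e ∈ 𝓔, k' ≤ e.card ∧ e.card ≤ k)
    (hdeg : ∀ v : V, (𝓔.filter (fun e => v ∈ e)).card ≤ Δ)
    (ht : (k : ℝ) ≤ t)
    (hq : (Real.exp 1 * t * (Δ : ℝ)) ^ ((1 : ℝ) / ((k' : ℝ) - 1)) ≤ (q : ℝ))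
    (hne : {σ : V → Fin q | ∀ e ∈ 𝓔, ¬ ∃ c', ∀ u ∈ e, σ u = c'}.Nonempty)
    (v : V) (c : Fin q) :
    ({σ : V → Fin q | (∀ e ∈ 𝓔, ¬ ∃ c', ∀ u ∈ e, σ u = c') ∧ σ v = c}.ncard : ℝ)
      ≤ (1 / (q : ℝ)) * (1 + 4 / t)
        * ({σ : V → Fin q | ∀ e ∈ 𝓔, ¬ ∃ c', ∀ u ∈ e, σ u = c'}.ncard : ℝ) :=
  marginal_upper_bound_general 𝓔 q k k' Δ t hk' hsize hdeg ht hq v c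
end

section
/- Under the same hypotheses (hyperedge sizes between k' and k, maximum degree Δ, t ≥ k, q ≥ (etΔ)^{1/(k'−1)}), for every vertex v and colour c, the probability under the uniform distribution over proper colourings that v receives colour c is at least (1/q)(1 − 1/t). -/
/-!
Recolouring `v` to `c` sends every proper colouring in which no edge `e ∋ v` has `e \ {v}`
coloured entirely `c` to a proper colouring with `v ↦ c`, at most `q` to one, so it suffices that
these blocking colourings form at most a `1/t` fraction. Each of the at most `Δ` blocking events
has probability at most `1/(tΔ)` by the counting form of the Local Lemma: adding one edge
constraint loses at most a `1/(tΔ)` fraction of the proper colourings (strong induction on the set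
of constraints), so dropping the constraints that meet the support of an event gains at most a
factor `e`; once they are dropped, the event is independent of the remaining constraints and has
probability `q^{-(|e|-1)} ≤ 1/(etΔ)`.
-/

open Finset Real

section Counting

variable {V α : Type*} [Fintype V] [DecidableEq V] [Fintype α] [DecidableEq α]

theorem card_filter_forall_eq_mul_pow {A : Finset (V → α)} {b : Finset V}
    (hA : DependsOn (· ∈ A) (↑b)ᶜ) (c : α) :
    #(A.filter fun σ => ∀ u ∈ b, σ u = c) * Fintype.card α ^ #b = #A := by
  set T := Fintype.piFinset fun u : V => if u ∈ b then (univ : Finset α) else {c}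
  have hT : #T = Fintype.card α ^ #b := by
    simp [T, Fintype.card_piFinset, apply_ite card, prod_ite_mem]
  rw [← hT, ← card_product]
  refine card_nbij' (fun p => b.piecewise p.2 p.1)
    (fun ρ => (b.piecewise (fun _ => c) ρ, b.piecewise ρ (fun _ => c))) ?_ ?_ ?_ ?_
  · rintro ⟨σ, τ⟩ h
    simp only [mem_coe, mem_product, mem_filter] at h ⊢
    exact (hA fun u hu => (b.piecewise_eq_of_notMem _ _ hu).symm).mp h.1.1
  · intro ρ hρ
    simp only [mem_coe, mem_product, mem_filter, T, Fintype.mem_piFinset]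
    refine ⟨⟨(hA fun u hu => (b.piecewise_eq_of_notMem _ _ hu).symm).mp hρ,
      fun u hu => b.piecewise_eq_of_mem _ _ hu⟩, fun u => ?_⟩
    by_cases hu : u ∈ b <;> simp [hu]
  · rintro ⟨σ, τ⟩ h
    simp only [mem_coe, mem_product, mem_filter, T, Fintype.mem_piFinset] at h
    have hτ : ∀ u ∉ b, τ u = c := fun u hu => by simpa [hu] using h.2 u
    ext u <;> by_cases hu : u ∈ b <;> simp [hu, h.1.2, hτ]
  · intro ρ _
    ext u
    by_cases hu : u ∈ b <;> simp [hu]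

theorem card_filter_exists_forall_eq_mul_pow {A : Finset (V → α)} {f : Finset V}
    (hA : DependsOn (· ∈ A) (↑f)ᶜ) {w : V} (hw : w ∈ f) :
    #(A.filter fun σ => ∃ c, ∀ u ∈ f, σ u = c) * Fintype.card α ^ (#f - 1) = #A := by
  have hfibre : ∀ c, (A.filter fun σ => ∃ c, ∀ u ∈ f, σ u = c).filter (fun σ => σ w = c)
      = (A.filter fun σ => σ w = c).filter fun σ => ∀ u ∈ f.erase w, σ u = c := by
    intro c
    ext σ
    simp only [mem_filter, mem_erase]
    constructor
    · rintro ⟨⟨hσ, c', hc'⟩, rfl⟩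
      exact ⟨⟨hσ, rfl⟩, fun u hu => (hc' u hu.2).trans (hc' w hw).symm⟩
    · rintro ⟨⟨hσ, rfl⟩, h⟩
      refine ⟨⟨hσ, σ w, fun u hu => ?_⟩, rfl⟩
      by_cases huw : u = w
      · rw [huw]
      · exact h u ⟨huw, hu⟩
  have hdep : ∀ c, DependsOn (· ∈ A.filter fun σ => σ w = c) (↑(f.erase w))ᶜ := by
    intro c σ τ h
    have hw' : w ∈ (↑(f.erase w) : Set V)ᶜ := by simp
    simp only [mem_filter, h w hw', hA fun u hu => h u fun hu' => hu (mem_of_mem_erase hu')]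
  have hmaps : ∀ s : Finset (V → α),
      Set.MapsTo (fun σ : V → α => σ w) ↑s ↑(univ : Finset α) :=
    fun _ _ _ => mem_coe.2 (mem_univ _)
  rw [card_eq_sum_card_fiberwise (hmaps _), card_eq_sum_card_fiberwise (hmaps A), sum_mul]
  refine sum_congr rfl fun c _ => ?_
  rw [hfibre, ← card_erase_of_mem hw]
  exact card_filter_forall_eq_mul_pow (hdep c) c

end Counting

section ProperColourings

variable {V : Type*} [Fintype V] [DecidableEq V]

def properColourings (α : Type*) [Fintype α] [DecidableEq α] (S : Finset (Finset V)) :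
    Finset (V → α) :=
  univ.filter fun σ => ∀ e ∈ S, ¬ ∃ c, ∀ u ∈ e, σ u = c

variable {α : Type*} [Fintype α] [DecidableEq α]

theorem properColourings_anti {S T : Finset (Finset V)} (h : S ⊆ T) :
    properColourings α T ⊆ properColourings α S := by
  intro σ hσ
  simp only [properColourings, mem_filter, mem_univ, true_and] at hσ ⊢
  exact fun e he => hσ e (h he)

theorem properColourings_insert (S : Finset (Finset V)) (f : Finset V) :
    properColourings α (insert f S)
      = (properColourings α S).filter fun σ => ¬ ∃ c, ∀ u ∈ f, σ u = c := by
  ext σ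
  simp only [properColourings, mem_filter, mem_univ, true_and, forall_mem_insert]
  exact and_comm

theorem dependsOn_mem_properColourings {S : Finset (Finset V)} {b : Finset V}
    (hS : ∀ g ∈ S, Disjoint b g) : DependsOn (· ∈ properColourings α S) (↑b)ᶜ := by
  intro σ τ h
  have hmono : ∀ g ∈ S, (∃ c, ∀ u ∈ g, σ u = c) ↔ ∃ c, ∀ u ∈ g, τ u = c :=
    fun g hg => exists_congr fun c => forall₂_congr fun u hu => by
      rw [h u fun hub => disjoint_left.1 (hS g hg) hub hu]
  simp only [properColourings, mem_filter, mem_univ, true_and]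
  exact propext (forall₂_congr fun g hg => not_congr (hmono g hg))

end ProperColourings

theorem one_le_exp_one_mul_one_sub_inv_pow {D : ℝ} {m : ℕ} (hm : (m : ℝ) + 1 ≤ D) :
    1 ≤ exp 1 * (1 - D⁻¹) ^ m := by
  rcases m.eq_zero_or_pos with rfl | hm0
  · simp
  have hm0' : (0 : ℝ) < m := by exact_mod_cast hm0
  have hD : D⁻¹ ≤ ((m : ℝ) + 1)⁻¹ := inv_anti₀ (by positivity) hm
  have h0 : 0 ≤ 1 - ((m : ℝ) + 1)⁻¹ := sub_nonneg.2 (inv_le_one_of_one_le₀ (by linarith))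
  calc (1 : ℝ) = ((1 + (m : ℝ)⁻¹) * (1 - ((m : ℝ) + 1)⁻¹)) ^ m := by
        rw [← one_pow m]; congr 1; field_simp; ring
    _ = (1 + (m : ℝ)⁻¹) ^ m * (1 - ((m : ℝ) + 1)⁻¹) ^ m := mul_pow _ _ _
    _ ≤ exp 1 * (1 - D⁻¹) ^ m := mul_le_mul one_add_inv_pow_le_exp
        (pow_le_pow_left₀ h0 (by linarith) m) (pow_nonneg h0 m) (exp_pos 1).le

theorem pow_card_mul_le_of_forall_insert {β : Type*} [DecidableEq β] (F : Finset β → ℝ)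
    {r : ℝ} (hr : 0 ≤ r) (A Γ : Finset β)
    (h : ∀ T ⊆ Γ, ∀ g ∈ Γ, g ∉ T → r * F (A ∪ T) ≤ F (insert g (A ∪ T))) :
    r ^ #Γ * F A ≤ F (A ∪ Γ) := by
  suffices ∀ T ⊆ Γ, r ^ #T * F A ≤ F (A ∪ T) from this Γ Subset.rfl
  intro T
  induction T using Finset.induction_on with
  | empty => simp
  | insert g T hgT ih =>
    intro hT
    rw [insert_subset_iff] at hT
    rw [card_insert_of_notMem hgT, pow_succ', mul_assoc, union_insert]
    exact (mul_le_mul_of_nonneg_left (ih hT.2) hr).trans (h T hT.2 g hT.1 hgT)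

section Hypergraph

variable {V : Type*} [DecidableEq V]

theorem card_filter_not_disjoint_le {𝓔 : Finset (Finset V)} {Δ : ℕ}
    (hdeg : ∀ u : V, #(𝓔.filter fun e => u ∈ e) ≤ Δ) (b : Finset V) :
    #(𝓔.filter fun g => ¬ Disjoint b g) ≤ #b * Δ := by
  have hsub : (𝓔.filter fun g => ¬ Disjoint b g)
      ⊆ b.biUnion fun u => 𝓔.filter fun e => u ∈ e := by
    intro g hg
    obtain ⟨hg, hbg⟩ := mem_filter.1 hg
    obtain ⟨u, hub, hug⟩ := not_disjoint_iff.1 hbg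
    exact mem_biUnion.2 ⟨u, hub, mem_filter.2 ⟨hg, hug⟩⟩
  calc #(𝓔.filter fun g => ¬ Disjoint b g)
      ≤ ∑ u ∈ b, #(𝓔.filter fun e => u ∈ e) := (card_le_card hsub).trans card_biUnion_le
    _ ≤ ∑ _u ∈ b, Δ := sum_le_sum fun u _ => hdeg u
    _ = #b * Δ := by rw [sum_const, smul_eq_mul]

structure LocalLemmaRegime (𝓔 : Finset (Finset V)) (q Δ : ℕ) (t : ℝ) : Prop where
  nonempty : ∀ e ∈ 𝓔, e.Nonempty
  degree_le : ∀ u : V, #(𝓔.filter fun e => u ∈ e) ≤ Δ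
  card_le : ∀ e ∈ 𝓔, (#e : ℝ) ≤ t
  exp_mul_le_pow : ∀ e ∈ 𝓔, exp 1 * t * Δ ≤ (q : ℝ) ^ (#e - 1)

variable [Fintype V] {α : Type*} [Fintype α] [DecidableEq α]

/- `hstep` is the Local Lemma step for proper subsets of `S`, so that this and the next lemma can
be used inside its proof by strong induction. -/
theorem card_properColourings_filter_disjoint_le {S : Finset (Finset V)} {b : Finset V} {D : ℝ}
    (hΓ : (#(S.filter fun g => ¬ Disjoint b g) : ℝ) + 1 ≤ D)
    (hstep : ∀ T ⊂ S, ∀ g ∈ S, g ∉ T →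
      (1 - D⁻¹) * #(properColourings α T) ≤ #(properColourings α (insert g T))) :
    (#(properColourings α (S.filter fun g => Disjoint b g)) : ℝ)
      ≤ exp 1 * #(properColourings α S) := by
  set S' := S.filter fun g => Disjoint b g
  set Γ := S.filter fun g => ¬ Disjoint b g
  have hD : 1 ≤ D := by linarith [(#Γ).cast_nonneg (α := ℝ)]
  have hchain : (1 - D⁻¹) ^ #Γ * #(properColourings α S') ≤ #(properColourings α S) := by
    rw [← filter_union_filter_not_eq (fun g => Disjoint b g) S]
    refine pow_card_mul_le_of_forall_insert (fun T => (#(properColourings α T) : ℝ))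
      (sub_nonneg.2 (inv_le_one_of_one_le₀ hD)) S' Γ fun T hT g hg hgT => ?_
    have hgS : g ∈ S := filter_subset _ _ hg
    have hgS'T : g ∉ S' ∪ T := by
      simp only [mem_union, S', mem_filter, not_or]
      exact ⟨fun h => (mem_filter.1 hg).2 h.2, hgT⟩
    refine hstep _ (ssubset_iff_of_subset ?_ |>.2 ⟨g, hgS, hgS'T⟩) g hgS hgS'T
    exact union_subset (filter_subset _ _) (hT.trans (filter_subset _ _))
  calc (#(properColourings α S') : ℝ)
      ≤ exp 1 * (1 - D⁻¹) ^ #Γ * #(properColourings α S') :=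
        le_mul_of_one_le_left (Nat.cast_nonneg _) (one_le_exp_one_mul_one_sub_inv_pow hΓ)
    _ ≤ exp 1 * #(properColourings α S) := by
        rw [mul_assoc]; exact mul_le_mul_of_nonneg_left hchain (exp_pos 1).le

theorem card_filter_properColourings_mul_le {S : Finset (Finset V)} {b : Finset V} {D : ℝ}
    (hΓ : (#(S.filter fun g => ¬ Disjoint b g) : ℝ) + 1 ≤ D)
    (hstep : ∀ T ⊂ S, ∀ g ∈ S, g ∉ T →
      (1 - D⁻¹) * #(properColourings α T) ≤ #(properColourings α (insert g T)))
    (P : (V → α) → Prop) [DecidablePred P] {p : ℕ}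
    (hP : ∀ A : Finset (V → α), DependsOn (· ∈ A) (↑b)ᶜ → #(A.filter P) * p ≤ #A)
    (hp : exp 1 * D ≤ p) :
    #((properColourings α S).filter P) * D ≤ #(properColourings α S) := by
  set S' := S.filter fun g => Disjoint b g
  have hS' : (#((properColourings α S').filter P) : ℝ) * p ≤ #(properColourings α S') := by
    exact_mod_cast hP _ (dependsOn_mem_properColourings fun g hg => (mem_filter.1 hg).2)
  have hPS : (#((properColourings α S).filter P) : ℝ)
      ≤ #((properColourings α S').filter P) := by
    exact_mod_cast card_le_card
      (filter_subset_filter _ (properColourings_anti (filter_subset _ _)))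
  have hexp := card_properColourings_filter_disjoint_le hΓ hstep
  have hD : 0 ≤ D := by linarith [(#(S.filter fun g => ¬ Disjoint b g)).cast_nonneg (α := ℝ)]
  refine le_of_mul_le_mul_left ?_ (exp_pos 1)
  calc exp 1 * (#((properColourings α S).filter P) * D)
      = #((properColourings α S).filter P) * (exp 1 * D) := by ring
    _ ≤ #((properColourings α S').filter P) * p :=
        mul_le_mul hPS hp (mul_nonneg (exp_pos 1).le hD) (Nat.cast_nonneg _)
    _ ≤ exp 1 * #(properColourings α S) := hS'.trans hexp

namespace LocalLemmaRegime

variable {𝓔 : Finset (Finset V)} {Δ : ℕ} {t : ℝ}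

theorem one_sub_inv_mul_card_le_card_insert (R : LocalLemmaRegime 𝓔 (Fintype.card α) Δ t)
    {S : Finset (Finset V)} (hS : S ⊆ 𝓔) {f : Finset V} (hf : f ∈ 𝓔) (hfS : f ∉ S) :
    (1 - (t * Δ)⁻¹) * #(properColourings α S) ≤ #(properColourings α (insert f S)) := by
  induction S using Finset.strongInduction generalizing f with | H S ih
  obtain ⟨w, hw⟩ := R.nonempty f hf
  have hΓ : (#(S.filter fun g => ¬ Disjoint f g) : ℝ) + 1 ≤ t * Δ := by
    have hsub : insert f (S.filter fun g => ¬ Disjoint f g)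
        ⊆ 𝓔.filter fun g => ¬ Disjoint f g :=
      insert_subset (mem_filter.2 ⟨hf, not_disjoint_iff.2 ⟨w, hw, hw⟩⟩)
        (filter_subset_filter _ hS)
    have hcard := (card_le_card hsub).trans (card_filter_not_disjoint_le R.degree_le f)
    rw [card_insert_of_notMem fun h => hfS (filter_subset _ _ h)] at hcard
    calc (#(S.filter fun g => ¬ Disjoint f g) : ℝ) + 1 ≤ #f * Δ := by exact_mod_cast hcard
      _ ≤ t * Δ := by gcongr; exact R.card_le f hf
  have hbad := card_filter_properColourings_mul_le (α := α) hΓ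
    (fun T hT g hg hgT => ih T hT (hT.subset.trans hS) (hS hg) hgT)
    (fun σ => ∃ c, ∀ u ∈ f, σ u = c)
    (fun A hA => (card_filter_exists_forall_eq_mul_pow hA hw).le)
    (by rw [← mul_assoc, Nat.cast_pow]; exact R.exp_mul_le_pow f hf)
  have hsplit := card_filter_add_card_filter_not (s := properColourings α S)
    (fun σ => ∃ c, ∀ u ∈ f, σ u = c)
  rw [← properColourings_insert] at hsplit
  have hD : 0 < t * Δ := by
    linarith [(#(S.filter fun g => ¬ Disjoint f g)).cast_nonneg (α := ℝ)]
  have hB := (le_inv_mul_iff₀' hD).2 hbad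
  rw [← @Nat.cast_inj ℝ, Nat.cast_add] at hsplit
  linarith

theorem card_filter_forall_erase_eq_mul_le (R : LocalLemmaRegime 𝓔 (Fintype.card α) Δ t)
    {e : Finset V} (he : e ∈ 𝓔) {v : V} (hv : v ∈ e) (c : α) :
    #((properColourings α 𝓔).filter fun σ => ∀ u ∈ e.erase v, σ u = c) * (t * Δ)
      ≤ #(properColourings α 𝓔) := by
  have hΔ : (1 : ℝ) ≤ Δ := by
    exact_mod_cast (card_pos.2 ⟨e, mem_filter.2 ⟨he, hv⟩⟩).trans_le (R.degree_le v)
  have hΓ : (#(𝓔.filter fun g => ¬ Disjoint (e.erase v) g) : ℝ) + 1 ≤ t * Δ := by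
    have hcard : (#(𝓔.filter fun g => ¬ Disjoint (e.erase v) g) : ℝ)
        ≤ #(e.erase v) * Δ := by
      exact_mod_cast card_filter_not_disjoint_le R.degree_le (e.erase v)
    have he' : (#(e.erase v) : ℝ) + 1 ≤ t := by
      exact_mod_cast (card_erase_add_one hv).symm ▸ R.card_le e he
    nlinarith
  refine card_filter_properColourings_mul_le hΓ
    (fun T hT g hg hgT => R.one_sub_inv_mul_card_le_card_insert hT.subset hg hgT) _
    (fun A hA => (card_filter_forall_eq_mul_pow hA c).le) ?_
  rw [card_erase_of_mem hv, ← mul_assoc, Nat.cast_pow]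
  exact R.exp_mul_le_pow e he

theorem card_blocked_le (R : LocalLemmaRegime 𝓔 (Fintype.card α) Δ t) (ht : 0 ≤ t)
    (v : V) (c : α) :
    (#((properColourings α 𝓔).filter fun σ =>
        ∃ e ∈ 𝓔, v ∈ e ∧ ∀ u ∈ e.erase v, σ u = c) : ℝ)
      ≤ t⁻¹ * #(properColourings α 𝓔) := by
  set Ev := 𝓔.filter fun e => v ∈ e
  set B := (properColourings α 𝓔).filter fun σ =>
    ∃ e ∈ 𝓔, v ∈ e ∧ ∀ u ∈ e.erase v, σ u = c
  set block := fun e : Finset V =>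
    (properColourings α 𝓔).filter fun σ => ∀ u ∈ e.erase v, σ u = c
  have hB : B ⊆ Ev.biUnion block := fun σ hσ => by
    obtain ⟨hσ, e, he, hve, hc⟩ := mem_filter.1 hσ
    exact mem_biUnion.2 ⟨e, mem_filter.2 ⟨he, hve⟩, mem_filter.2 ⟨hσ, hc⟩⟩
  rcases Ev.eq_empty_or_nonempty with hE | ⟨e, he⟩
  · rw [hE, biUnion_empty, subset_empty] at hB
    rw [hB, card_empty, Nat.cast_zero]
    positivity
  have hΔ : (0 : ℝ) < Δ := by exact_mod_cast (card_pos.2 ⟨e, he⟩).trans_le (R.degree_le v)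
  obtain ⟨he, -⟩ := mem_filter.1 he
  have ht : (0 : ℝ) < t := by
    have : (0 : ℝ) < #e := by exact_mod_cast (R.nonempty e he).card_pos
    linarith [R.card_le e he]
  have hB' : (#B : ℝ) ≤ ∑ e ∈ Ev, (#(block e) : ℝ) :=
    mod_cast (card_le_card hB).trans card_biUnion_le
  rw [le_inv_mul_iff₀ ht]
  refine le_of_mul_le_mul_left ?_ hΔ
  calc (Δ : ℝ) * (t * #B) = #B * (t * Δ) := by ring
    _ ≤ (∑ e ∈ Ev, (#(block e) : ℝ)) * (t * Δ) :=
        mul_le_mul_of_nonneg_right hB' (mul_pos ht hΔ).le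
    _ = ∑ e ∈ Ev, #(block e) * (t * Δ) := sum_mul _ _ _
    _ ≤ ∑ _e ∈ Ev, (#(properColourings α 𝓔) : ℝ) := sum_le_sum fun e he =>
        R.card_filter_forall_erase_eq_mul_le (mem_filter.1 he).1 (mem_filter.1 he).2 c
    _ = #Ev * #(properColourings α 𝓔) := by rw [sum_const, nsmul_eq_mul]
    _ ≤ Δ * #(properColourings α 𝓔) := by gcongr; exact_mod_cast R.degree_le v

end LocalLemmaRegime

theorem update_mem_properColourings {𝓔 : Finset (Finset V)} {σ : V → α}
    (hσ : σ ∈ properColourings α 𝓔) {v : V} {c : α}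
    (hunblocked : ¬ ∃ e ∈ 𝓔, v ∈ e ∧ ∀ u ∈ e.erase v, σ u = c) :
    Function.update σ v c ∈ properColourings α 𝓔 := by
  simp only [properColourings, mem_filter, mem_univ, true_and] at hσ ⊢
  rintro e he ⟨c', hc'⟩
  by_cases hve : v ∈ e
  · have hc : c' = c := by rw [← hc' v hve, Function.update_self]
    refine hunblocked ⟨e, he, hve, fun u hu => ?_⟩
    rw [← hc, ← hc' u (mem_of_mem_erase hu), Function.update_of_ne (ne_of_mem_erase hu)]
  · refine hσ e he ⟨c', fun u hu => ?_⟩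
    rw [← hc' u hu, Function.update_of_ne (ne_of_mem_of_not_mem hu hve)]

theorem card_unblocked_le (𝓔 : Finset (Finset V)) (v : V) (c : α) :
    #((properColourings α 𝓔).filter fun σ =>
        ¬ ∃ e ∈ 𝓔, v ∈ e ∧ ∀ u ∈ e.erase v, σ u = c)
      ≤ Fintype.card α * #((properColourings α 𝓔).filter fun σ => σ v = c) := by
  refine card_le_mul_card_image_of_maps_to (f := fun σ => Function.update σ v c)
    (fun σ hσ => ?_) _ fun τ _ => ?_
  · obtain ⟨hσ, hunblocked⟩ := mem_filter.1 hσ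
    exact mem_filter.2 ⟨update_mem_properColourings hσ hunblocked, Function.update_self v c σ⟩
  · rw [← card_univ]
    refine card_le_card_of_injOn (fun σ => σ v) (fun _ _ => mem_coe.2 (mem_univ _)) ?_
    intro σ hσ ρ hρ hσρ
    simp only [mem_coe, mem_filter] at hσ hρ
    calc σ = Function.update (Function.update σ v c) v (σ v) := by
          rw [Function.update_idem, Function.update_eq_self]
      _ = ρ := by
          rw [hσ.2, ← hρ.2, show σ v = ρ v from hσρ, Function.update_idem,
            Function.update_eq_self]

end Hypergraph

theorem LocalLemmaRegime.of_rpow_le {V : Type*} [DecidableEq V] {𝓔 : Finset (Finset V)}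
    {q k k' Δ : ℕ} {t : ℝ} (hq0 : 0 < q) (hk' : 2 ≤ k')
    (hsize : ∀ e ∈ 𝓔, k' ≤ #e ∧ #e ≤ k)
    (hdeg : ∀ v : V, #(𝓔.filter fun e => v ∈ e) ≤ Δ) (ht : (k : ℝ) ≤ t)
    (hq : (exp 1 * t * Δ) ^ ((1 : ℝ) / ((k' : ℝ) - 1)) ≤ q) :
    LocalLemmaRegime 𝓔 q Δ t where
  nonempty e he := card_pos.1 (by linarith [(hsize e he).1])
  degree_le := hdeg
  card_le e he := le_trans (by exact_mod_cast (hsize e he).2) ht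
  exp_mul_le_pow e he := by
    have ht0 : 0 ≤ t := k.cast_nonneg.trans ht
    have hk'R : (k' : ℝ) - 1 = (k' - 1 : ℕ) := by rw [Nat.cast_sub (by omega), Nat.cast_one]
    have hk'0 : (0 : ℝ) < (k' - 1 : ℕ) := by exact_mod_cast (by omega : 0 < k' - 1)
    rw [one_div, hk'R, Real.rpow_inv_le_iff_of_pos (by positivity) q.cast_nonneg hk'0,
      Real.rpow_natCast] at hq
    have hk'e : k' - 1 ≤ #e - 1 := Nat.sub_le_sub_right (hsize e he).1 1
    exact hq.trans (pow_le_pow_right₀ (by exact_mod_cast hq0) hk'e)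

theorem marginal_lower_bound_general
    {V : Type*} [Fintype V] [DecidableEq V] (𝓔 : Finset (Finset V))
    (q k k' Δ : ℕ) (t : ℝ) (hk' : 2 ≤ k')
    (hsize : ∀ e ∈ 𝓔, k' ≤ e.card ∧ e.card ≤ k)
    (hdeg : ∀ v : V, (𝓔.filter (fun e => v ∈ e)).card ≤ Δ)
    (ht : (k : ℝ) ≤ t)
    (hq : (Real.exp 1 * t * (Δ : ℝ)) ^ ((1 : ℝ) / ((k' : ℝ) - 1)) ≤ (q : ℝ))
    (v : V) (c : Fin q) :
    (1 / (q : ℝ)) * (1 - 1 / t)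
        * ({σ : V → Fin q | ∀ e ∈ 𝓔, ¬ ∃ c', ∀ u ∈ e, σ u = c'}.ncard : ℝ)
      ≤ ({σ : V → Fin q | (∀ e ∈ 𝓔, ¬ ∃ c', ∀ u ∈ e, σ u = c') ∧ σ v = c}.ncard : ℝ) := by
  have R : LocalLemmaRegime 𝓔 (Fintype.card (Fin q)) Δ t := by
    rw [Fintype.card_fin]
    exact .of_rpow_le c.pos hk' hsize hdeg ht hq
  have hN : {σ : V → Fin q | ∀ e ∈ 𝓔, ¬ ∃ c', ∀ u ∈ e, σ u = c'}
      = ↑(properColourings (Fin q) 𝓔) := by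
    ext σ; simp [properColourings]
  have hNc : {σ : V → Fin q | (∀ e ∈ 𝓔, ¬ ∃ c', ∀ u ∈ e, σ u = c') ∧ σ v = c}
      = ↑((properColourings (Fin q) 𝓔).filter fun σ => σ v = c) := by
    ext σ; simp [properColourings]
  rw [hN, hNc, Set.ncard_coe_finset, Set.ncard_coe_finset]
  have hsplit := congrArg (Nat.cast (R := ℝ))
    (card_filter_add_card_filter_not (s := properColourings (Fin q) 𝓔)
      fun σ => ∃ e ∈ 𝓔, v ∈ e ∧ ∀ u ∈ e.erase v, σ u = c)
  rw [Nat.cast_add] at hsplit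
  have hblocked := R.card_blocked_le (k.cast_nonneg.trans ht) v c
  have hunblocked : (_ : ℝ) ≤ _ := Nat.cast_le.2 (card_unblocked_le 𝓔 v c)
  rw [Fintype.card_fin, Nat.cast_mul] at hunblocked
  rw [one_div, one_div, mul_assoc, inv_mul_le_iff₀ (by exact_mod_cast c.pos)]
  linarith

/-- Marginal lower bound in the local lemma regime.  Let `H = (V,𝓔)` be a
hypergraph of maximum degree `Δ` whose hyperedges all have size between `k'` and `k`.
If `t ≥ k` and `q ≥ (etΔ)^{1/(k'−1)}`, then for every vertex `v` and colour `c`, the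
probability under the uniform distribution over proper `q`-colourings that `v` gets
colour `c` is at least `(1/q)(1 − 1/t)`. -/
theorem marginal_lower_bound
    {V : Type*} [Fintype V] [DecidableEq V] (𝓔 : Finset (Finset V))
    (q k k' Δ : ℕ) (t : ℝ) (hk' : 2 ≤ k')
    (hsize : ∀ e ∈ 𝓔, k' ≤ e.card ∧ e.card ≤ k)
    (hdeg : ∀ v : V, (𝓔.filter (fun e => v ∈ e)).card ≤ Δ)
    (ht : (k : ℝ) ≤ t)
    (hq : (Real.exp 1 * t * (Δ : ℝ)) ^ ((1 : ℝ) / ((k' : ℝ) - 1)) ≤ (q : ℝ))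
    (hne : {σ : V → Fin q | ∀ e ∈ 𝓔, ¬ ∃ c', ∀ u ∈ e, σ u = c'}.Nonempty)
    (v : V) (c : Fin q) :
    (1 / (q : ℝ)) * (1 - 1 / t)
        * ({σ : V → Fin q | ∀ e ∈ 𝓔, ¬ ∃ c', ∀ u ∈ e, σ u = c'}.ncard : ℝ)
      ≤ ({σ : V → Fin q | (∀ e ∈ 𝓔, ¬ ∃ c', ∀ u ∈ e, σ u = c') ∧ σ v = c}.ncard : ℝ) :=
  marginal_lower_bound_general 𝓔 q k k' Δ t hk' hsize hdeg ht hq v c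
end
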